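/- arXiv:1705.02040 — 3 statements merged into one kernel-verified Lean document; each statement's English description precedes it below -/
import Mathlib

section
/- For every natural number n, there exist natural numbers r, s, t such that binomial(2r + 2s + t, 2) + s - r = n. -/
/-!
Write `n = C(m, 2) + d` with `0 ≤ d < m`. If `2d ≤ m`, take `(r, s, t) = (0, d, m - 2d)`: the
top argument is `m` and the correction `s - r` is `d`. Otherwise take `(r, s, t) = (m - d, 0, 2d - m + 1)`:
the top argument is `m + 1`, and `C(m + 1, 2) - (m - d) = C(m, 2) + d`.
-/

lemma Nat.choose_two_succ (m : ℕ) : (m + 1).choose 2 = m.choose 2 + m := by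
  rw [Nat.choose_succ_succ', Nat.choose_one_right, add_comm]

lemma Nat.exists_eq_choose_two_add_of_lt (n : ℕ) : ∃ m d : ℕ, d < m ∧ n = m.choose 2 + d := by
  induction n with
  | zero => exact ⟨1, 0, Nat.one_pos, rfl⟩
  | succ n ih =>
    obtain ⟨m, d, hdm, rfl⟩ := ih
    rcases (Nat.succ_le_of_lt hdm).lt_or_eq with hlt | heq
    · exact ⟨m, d + 1, hlt, rfl⟩
    · exact ⟨m + 1, 0, Nat.succ_pos m, by rw [Nat.choose_two_succ]; omega⟩

theorem stmt_0 (n : ℕ) :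
    ∃ r s t : ℕ, ((Nat.choose (2 * r + 2 * s + t) 2 : ℤ)) + (s : ℤ) - (r : ℤ) = n := by
  obtain ⟨m, d, hdm, rfl⟩ := Nat.exists_eq_choose_two_add_of_lt n
  rcases le_or_gt (2 * d) m with hsmall | hlarge
  · refine ⟨0, d, m - 2 * d, ?_⟩
    rw [show 2 * 0 + 2 * d + (m - 2 * d) = m by omega]
    push_cast
    ring
  · refine ⟨m - d, 0, 2 * d - m + 1, ?_⟩
    rw [show 2 * (m - d) + 2 * 0 + (2 * d - m + 1) = m + 1 by omega, Nat.choose_two_succ]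
    push_cast [hdm.le]
    ring
end

section
/- In the group G = ⟨a, b | a^p = b^p, a^b = a^(p+1)⟩ with p prime, the elements a and b satisfy a^(p²) = 1 and b^(p²) = 1. -/
/-- The relations of the group `A_p = ⟨a, b | a^p = b^p, a^b = a^(p+1)⟩`. -/
def ApRels (p : ℕ) : Set (FreeGroup (Fin 2)) :=
  {FreeGroup.of 0 ^ p * (FreeGroup.of 1 ^ p)⁻¹,
   (FreeGroup.of 1)⁻¹ * FreeGroup.of 0 * FreeGroup.of 1 * (FreeGroup.of 0 ^ (p + 1))⁻¹}

/- Conjugating `a ^ n` by `b` gives `a ^ ((n + 1) * n)` on one side and `a ^ n` on the other,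
so `a ^ (n ^ 2) = a ^ ((n + 1) * n - n) = 1`. -/
theorem pow_sq_eq_one_of_conj_eq_pow_succ {G : Type*} [Group G] {a b : G} {n : ℕ}
    (hconj : b⁻¹ * a * b = a ^ (n + 1)) (hcomm : Commute b (a ^ n)) :
    a ^ (n ^ 2) = 1 := by
  have hfix : b⁻¹ * a ^ n * b = a ^ n := by
    rw [mul_assoc, ← hcomm.eq, inv_mul_cancel_left]
  have hpow : b⁻¹ * a ^ n * b = a ^ ((n + 1) * n) := by
    simpa only [inv_inv, pow_mul, hconj] using (conj_pow (a := b⁻¹) (b := a) (i := n)).symm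
  have : a ^ (n ^ 2) * a ^ n = a ^ n := by
    rw [← pow_add, show n ^ 2 + n = (n + 1) * n by ring, ← hpow, hfix]
  exact mul_eq_right.mp this

theorem pow_sq_eq_one_of_pow_eq_pow_of_conj_eq_pow_succ {G : Type*} [Group G] {a b : G} {n : ℕ}
    (hpow : a ^ n = b ^ n) (hconj : b⁻¹ * a * b = a ^ (n + 1)) :
    a ^ (n ^ 2) = 1 ∧ b ^ (n ^ 2) = 1 := by
  have ha : a ^ (n ^ 2) = 1 :=
    pow_sq_eq_one_of_conj_eq_pow_succ hconj (hpow ▸ Commute.self_pow b n)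
  refine ⟨ha, ?_⟩
  rw [sq, pow_mul, ← hpow, ← pow_mul, ← sq, ha]

theorem stmt_4_general (p : ℕ) :
    (PresentedGroup.of (rels := ApRels p) 0) ^ (p ^ 2) = 1 ∧
    (PresentedGroup.of (rels := ApRels p) 1) ^ (p ^ 2) = 1 := by
  have hpow := PresentedGroup.mk_eq_mk_of_mul_inv_mem (rels := ApRels p) (Set.mem_insert _ _)
  have hconj := PresentedGroup.mk_eq_mk_of_mul_inv_mem (rels := ApRels p)
    (Set.mem_insert_of_mem _ rfl)
  simp only [map_pow, map_mul, map_inv] at hpow hconj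
  exact pow_sq_eq_one_of_pow_eq_pow_of_conj_eq_pow_succ hpow hconj

theorem stmt_4 (p : ℕ) (hp : p.Prime) :
    (PresentedGroup.of (rels := ApRels p) 0) ^ (p ^ 2) = 1 ∧
    (PresentedGroup.of (rels := ApRels p) 1) ^ (p ^ 2) = 1 :=
  stmt_4_general p
end

section
/- Let n be a natural number and let m be the smallest positive integer with binomial(m,2) + floor(m/2) ≥ n. Set d := n − binomial(m,2). If d ≥ 0 set s := d, r := 0; otherwise set r := −d, s := 0. Then r + s ≤ floor(m/2) and hence t := m − 2r − 2s ≥ 0, and binomial(2r+2s+t, 2) + s − r = n. -/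
/-! Since `d = s - r` in both cases, the identity is just `C(m, 2) + d = n` once `2r + 2s ≤ m`.
For `d ≥ 0` the bound `s ≤ m / 2` is the defining inequality of `m`; for `d < 0` it is the
minimality of `m`: `m - 1` fails, and `C(m, 2) = C(m - 1, 2) + (m - 1)` leaves a gap below `m / 2`. -/

theorem Nat.succ_choose_two_lt_of_choose_two_add_half_lt {n k : ℕ}
    (h : k.choose 2 + k / 2 < n) : (k + 1).choose 2 < n + (k + 1) / 2 := by
  have hpascal : (k + 1).choose 2 = k + k.choose 2 := by
    simpa using Nat.choose_succ_succ' k 1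
  omega

theorem Nat.choose_two_le_add_half_of_minimal {n m : ℕ}
    (hmin : ∀ k : ℕ, 0 < k → (n : ℤ) ≤ (Nat.choose k 2 : ℤ) + (k / 2 : ℕ) → m ≤ k) :
    m.choose 2 ≤ n + m / 2 := by
  rcases m with _ | _ | k
  · simp
  · simp
  · have hk : (k + 1).choose 2 + (k + 1) / 2 < n := by
      by_contra! h
      have := hmin (k + 1) k.succ_pos (by exact_mod_cast h)
      omega
    exact (Nat.succ_choose_two_lt_of_choose_two_add_half_lt hk).le

theorem stmt_19_general (n : ℕ) (m : ℕ)
    (hge : (n : ℤ) ≤ (Nat.choose m 2 : ℤ) + (m / 2 : ℕ))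
    (hmin : ∀ k : ℕ, 0 < k → (n : ℤ) ≤ (Nat.choose k 2 : ℤ) + (k / 2 : ℕ) → m ≤ k)
    (d : ℤ) (hd : d = (n : ℤ) - (Nat.choose m 2 : ℤ))
    (r s : ℕ)
    (hr : r = if 0 ≤ d then 0 else (-d).toNat)
    (hs : s = if 0 ≤ d then d.toNat else 0) :
    r + s ≤ m / 2 ∧ 2 * r + 2 * s ≤ m ∧
      ((Nat.choose (2 * r + 2 * s + (m - 2 * r - 2 * s)) 2 : ℤ)) + (s : ℤ) - (r : ℤ) = n := by
  have hs : s = d.toNat := by split_ifs at hs <;> omega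
  have hr : r = (-d).toNat := by split_ifs at hr <;> omega
  have hdeficit := Nat.choose_two_le_add_half_of_minimal hmin
  have hrs : r + s ≤ m / 2 := by omega
  refine ⟨hrs, by omega, ?_⟩
  rw [show 2 * r + 2 * s + (m - 2 * r - 2 * s) = m by omega]
  omega

theorem stmt_19 (n : ℕ) (m : ℕ) (hm : 0 < m)
    (hge : (n : ℤ) ≤ (Nat.choose m 2 : ℤ) + (m / 2 : ℕ))
    (hmin : ∀ k : ℕ, 0 < k → (n : ℤ) ≤ (Nat.choose k 2 : ℤ) + (k / 2 : ℕ) → m ≤ k)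
    (d : ℤ) (hd : d = (n : ℤ) - (Nat.choose m 2 : ℤ))
    (r s : ℕ)
    (hr : r = if 0 ≤ d then 0 else (-d).toNat)
    (hs : s = if 0 ≤ d then d.toNat else 0) :
    r + s ≤ m / 2 ∧ 2 * r + 2 * s ≤ m ∧
      ((Nat.choose (2 * r + 2 * s + (m - 2 * r - 2 * s)) 2 : ℤ)) + (s : ℤ) - (r : ℤ) = n :=
  stmt_19_general n m hge hmin d hd r s hr hs
end
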